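/- Let (K, δ) be a differential field and f ∈ K{x} an irreducible differential polynomial with nonzero separant s_f. Then the saturated ideal [f] : s_f^∞ = {h ∈ K{x} : s_f^m · h ∈ [f] for some m ≥ 0} is a prime differential ideal of K{x}. -/

import Mathlib

set_option synthInstance.maxHeartbeats 1000000
set_option maxHeartbeats 1000000

open MvPolynomial
noncomputable section
variable {K : Type*} [Field K]

/-- order of a differential polynomial -/
def ordOf (f : MvPolynomial ℕ K) : ℕ := f.vars.sup id

/-- separant -/
def sep (f : MvPolynomial ℕ K) : MvPolynomial ℕ K := pderiv (ordOf f) f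

/-- rank of a differential polynomial -/
def rankOf (f : MvPolynomial ℕ K) : ℕ × ℕ := (ordOf f, f.degreeOf (ordOf f))

/-- the differential ideal generated by f -/
def diffIdeal (D : Derivation ℤ (MvPolynomial ℕ K) (MvPolynomial ℕ K))
    (f : MvPolynomial ℕ K) : Ideal (MvPolynomial ℕ K) :=
  Ideal.span (Set.range fun n : ℕ => (⇑D)^[n] f)

/-- saturation I : s^∞ -/
def saturation {R : Type*} [CommRing R] (J : Ideal R) (s : R) : Ideal R where
  carrier := {h | ∃ m : ℕ, s ^ m * h ∈ J}
  zero_mem' := ⟨0, by simp⟩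
  add_mem' := by
    rintro a b ⟨m, hm⟩ ⟨n, hn⟩
    refine ⟨m + n, ?_⟩
    have h : s ^ (m + n) * (a + b) = s ^ n * (s ^ m * a) + s ^ m * (s ^ n * b) := by ring
    rw [h]
    exact J.add_mem (J.mul_mem_left _ hm) (J.mul_mem_left _ hn)
  smul_mem' := by
    rintro c a ⟨m, hm⟩
    refine ⟨m, ?_⟩
    have h : s ^ m * (c • a) = c * (s ^ m * a) := by rw [smul_eq_mul]; ring
    rw [h]
    exact J.mul_mem_left _ hm

/-- evaluation of a differential polynomial at a point of K -/
def evalD (δ : Derivation ℤ K K) (a : K) (f : MvPolynomial ℕ K) : K :=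
  MvPolynomial.eval (fun n => (⇑δ)^[n] a) f

/-- the field of constants -/
def constants (δ : Derivation ℤ K K) : Subfield K where
  carrier := {a | δ a = 0}
  zero_mem' := by simp
  one_mem' := by simp
  add_mem' := by intro a b ha hb; simp only [Set.mem_setOf_eq] at *; rw [map_add, ha, hb, add_zero]
  mul_mem' := by
    intro a b ha hb; simp only [Set.mem_setOf_eq] at *
    rw [Derivation.leibniz, ha, hb]; simp
  neg_mem' := by intro a ha; simp only [Set.mem_setOf_eq] at *; rw [map_neg, ha, neg_zero]
  inv_mem' := by
    intro a ha
    simp only [Set.mem_setOf_eq] at *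
    rcases eq_or_ne a 0 with rfl | h
    · simp
    · have h1 : a * a⁻¹ = 1 := mul_inv_cancel₀ h
      have h2 : δ (a * a⁻¹) = 0 := by rw [h1]; exact δ.map_one_eq_zero
      rw [Derivation.leibniz, ha] at h2
      simp only [smul_eq_mul, mul_zero, add_zero, zero_mul, smul_zero] at h2
      exact (mul_eq_zero.mp h2).resolve_left h

/-- the SDCF axiom scheme -/
def SDCFAx (δ : Derivation ℤ K K) : Prop :=
  ∀ f g : MvPolynomial ℕ K, f ≠ 0 → g ≠ 0 → sep f ≠ 0 → ordOf g < ordOf f →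
    ∃ a : K, evalD δ a f = 0 ∧ evalD δ a g ≠ 0

/-!
Let `n = ord f`, `s = s_f`, and write `D^k f = s * x_{n+k} + T_k` with `ord T_k < n + k` for
`k ≥ 1`. In `K{x}[1/s]` the substitution fixing `x_0, …, x_n` and sending `x_{n+k}` to `-T_k / s`
(recursively in `k`) is a `K`-algebra map `φ` that fixes `f`, kills every `D^k f` with `k ≥ 1`, and
satisfies `p ≡ φ p` modulo `[f] K{x}[1/s]`. Hence `[f] : s^∞` is the preimage under `φ` of
`f K{x}[1/s]`, which is prime because `f` is prime and does not divide `s`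
(`deg_{x_n} s < deg_{x_n} f`).
-/

section Saturation

variable {R : Type*} [CommRing R]

theorem comap_map_algebraMap_away_eq_saturation (I : Ideal R) (s : R) :
    (I.map (algebraMap R (Localization.Away s))).comap (algebraMap R _) = saturation I s := by
  ext g
  rw [Ideal.mem_comap, IsLocalization.algebraMap_mem_map_algebraMap_iff (Submonoid.powers s)]
  simp only [Submonoid.mem_powers_iff, exists_exists_eq_and]
  rfl

theorem Derivation.map_mem_saturation (D : Derivation ℤ R R) {I : Ideal R}
    (hI : ∀ x ∈ I, D x ∈ I) (s : R) {h : R} (hh : h ∈ saturation I s) :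
    D h ∈ saturation I s := by
  obtain ⟨m, hm⟩ := hh
  refine ⟨m + 1, ?_⟩
  have key : s ^ (m + 1) * D h = s * D (s ^ m * h) - (m : R) * D s * (s ^ m * h) := by
    rw [D.leibniz, D.leibniz_pow]
    rcases m with _ | m
    · simp
    · simp only [smul_eq_mul, nsmul_eq_mul, Nat.add_sub_cancel, Nat.cast_succ, pow_succ]
      ring
  rw [key]
  exact I.sub_mem (I.mul_mem_left _ (hI _ hm)) (I.mul_mem_left _ hm)

theorem Derivation.map_mem_span_range_iterate (D : Derivation ℤ R R) (a : R) {x : R}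
    (hx : x ∈ Ideal.span (Set.range fun n : ℕ => (⇑D)^[n] a)) :
    D x ∈ Ideal.span (Set.range fun n : ℕ => (⇑D)^[n] a) := by
  induction hx using Submodule.span_induction with
  | mem y hy =>
    obtain ⟨k, rfl⟩ := hy
    exact Ideal.subset_span ⟨k + 1, Function.iterate_succ_apply' (⇑D) k a⟩
  | zero => simp
  | add y z _ _ hy hz => rw [map_add]; exact add_mem hy hz
  | smul r y hy ihy =>
    rw [smul_eq_mul, D.leibniz, smul_eq_mul, smul_eq_mul]
    exact add_mem (Ideal.mul_mem_left _ _ ihy) (Ideal.mul_mem_right _ _ hy)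

end Saturation

section Supported

variable {R σ : Type*} [CommSemiring R] {t : Set σ}

theorem algHom_eq_of_mem_supported {A : Type*} [CommRing A] [Algebra R A]
    (φ ψ : MvPolynomial σ R →ₐ[R] A) (h : ∀ i ∈ t, φ (X i) = ψ (X i)) {p : MvPolynomial σ R}
    (hp : p ∈ supported R t) : φ p = ψ p := by
  rw [supported_eq_adjoin_X] at hp
  exact AlgHom.adjoin_le_equalizer φ ψ (by rintro _ ⟨i, hi, rfl⟩; exact h i hi) hp

theorem algHom_sub_mem_of_mem_supported {A : Type*} [CommRing A] [Algebra R A] (I : Ideal A)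
    (φ ψ : MvPolynomial σ R →ₐ[R] A) (h : ∀ i ∈ t, φ (X i) - ψ (X i) ∈ I)
    {p : MvPolynomial σ R} (hp : p ∈ supported R t) : φ p - ψ p ∈ I := by
  rw [← Ideal.Quotient.eq]
  exact algHom_eq_of_mem_supported ((Ideal.Quotient.mkₐ R I).comp φ)
    ((Ideal.Quotient.mkₐ R I).comp ψ) (fun i hi => Ideal.Quotient.eq.mpr (h i hi)) hp

theorem Derivation.map_mem_of_mem_supported {S : Type*} [CommSemiring S]
    [Algebra S (MvPolynomial σ R)] (E : Derivation S (MvPolynomial σ R) (MvPolynomial σ R))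
    {B : Subalgebra R (MvPolynomial σ R)} (htB : supported R t ≤ B)
    (hX : ∀ i ∈ t, E (X i) ∈ B) (hC : ∀ a, E (C a) ∈ B) {p : MvPolynomial σ R}
    (hp : p ∈ supported R t) : E p ∈ B := by
  have hsub := htB
  rw [supported_eq_adjoin_X] at hp hsub
  induction hp using Algebra.adjoin_induction with
  | mem x hx => obtain ⟨i, hi, rfl⟩ := hx; exact hX i hi
  | algebraMap a => exact hC a
  | add x y _ _ hx hy => rw [map_add]; exact add_mem hx hy
  | mul x y hx' hy' hx hy =>
    rw [E.leibniz, smul_eq_mul, smul_eq_mul]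
    exact add_mem (mul_mem (hsub hx') hy) (mul_mem (hsub hy') hx)

theorem pderiv_mem_supported {i : σ} {p : MvPolynomial σ R} (hp : p ∈ supported R t) :
    pderiv i p ∈ supported R t := by
  classical
  refine (pderiv i).map_mem_of_mem_supported le_rfl (fun j _ => ?_) (fun a => by simp) hp
  rw [pderiv_X]
  by_cases h : i = j <;> simp [h]

end Supported

section Degree

variable {R σ : Type*} [CommSemiring R]

theorem degreeOf_pderiv_lt {i : σ} {p : MvPolynomial σ R} (h : pderiv i p ≠ 0) :
    degreeOf i (pderiv i p) < degreeOf i p := by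
  have hsucc : ∀ m ∈ (pderiv i p).support, m i + 1 ≤ degreeOf i p := fun m hm => by
    have hcoeff : coeff (m + Finsupp.single i 1) p ≠ 0 := fun h0 =>
      mem_support_iff.mp hm (by rw [coeff_pderiv, h0, zero_mul])
    simpa using monomial_le_degreeOf i (mem_support_iff.mpr hcoeff)
  obtain ⟨m, hm⟩ := support_nonempty.mpr h
  exact (degreeOf_lt_iff (by have := hsucc m hm; omega)).mpr fun m' hm' => hsucc m' hm'

theorem not_dvd_pderiv [IsDomain R] {i : σ} {p : MvPolynomial σ R} (h : pderiv i p ≠ 0) :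
    ¬ p ∣ pderiv i p := by
  rintro ⟨r, hr⟩
  have hp : p ≠ 0 := by rintro rfl; exact h (by simp)
  have hr0 : r ≠ 0 := by rintro rfl; simp_all
  have := degreeOf_pderiv_lt h
  rw [hr, degreeOf_mul_eq hp hr0] at this
  omega

end Degree

section DerivationOrder

variable (δ : Derivation ℤ K K) (D : Derivation ℤ (MvPolynomial ℕ K) (MvPolynomial ℕ K))
  (hDX : ∀ n : ℕ, D (X n) = X (n + 1)) (hDC : ∀ a : K, D (C a) = C (δ a))
include hDX hDC

theorem map_mem_supported_Iio_succ {m : ℕ} {p : MvPolynomial ℕ K}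
    (hp : p ∈ supported K (Set.Iio m)) : D p ∈ supported K (Set.Iio (m + 1)) := by
  refine D.map_mem_of_mem_supported (supported_mono (Set.Iio_subset_Iio m.le_succ))
    (fun i hi => ?_) (fun a => ?_) hp
  · rw [hDX]
    exact X_mem_supported.mpr (Nat.succ_lt_succ hi)
  · rw [hDC]
    exact Subalgebra.algebraMap_mem _ (δ a)

theorem map_sub_pderiv_mul_X_mem_supported {m : ℕ} {p : MvPolynomial ℕ K}
    (hp : p ∈ supported K (Set.Iio (m + 1))) :
    D p - pderiv m p * X (m + 1) ∈ supported K (Set.Iio (m + 1)) := by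
  classical
  let E : Derivation ℤ (MvPolynomial ℕ K) (MvPolynomial ℕ K) :=
    D - ((X (m + 1) : MvPolynomial ℕ K) • pderiv m).restrictScalars ℤ
  have hE : ∀ q, E q = D q - pderiv m q * X (m + 1) := fun q => by
    simp [E, mul_comm]
  rw [← hE]
  refine E.map_mem_of_mem_supported le_rfl (fun i hi => ?_) (fun a => ?_) hp
  · rw [hE, hDX, pderiv_X]
    rcases eq_or_ne i m with rfl | him
    · simp
    · simp only [Pi.single_eq_of_ne' him.symm, zero_mul, sub_zero, X_mem_supported, Set.mem_Iio]
      exact Nat.succ_lt_succ (lt_of_le_of_ne (Nat.lt_succ_iff.mp hi) him)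
  · rw [hE, hDC, pderiv_C, zero_mul, sub_zero]
    exact Subalgebra.algebraMap_mem _ (δ a)

theorem iterate_sub_pderiv_mul_X_mem_supported {n : ℕ} {f : MvPolynomial ℕ K}
    (hf : f ∈ supported K (Set.Iio (n + 1))) {k : ℕ} (hk : 1 ≤ k) :
    (⇑D)^[k] f - pderiv n f * X (n + k) ∈ supported K (Set.Iio (n + k)) := by
  induction k, hk using Nat.le_induction with
  | base => simpa using map_sub_pderiv_mul_X_mem_supported δ D hDX hDC hf
  | succ k hk ih =>
    have hs := pderiv_mem_supported (i := n) hf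
    have key : (⇑D)^[k + 1] f - pderiv n f * X (n + (k + 1))
        = D ((⇑D)^[k] f - pderiv n f * X (n + k)) + D (pderiv n f) * X (n + k) := by
      rw [Function.iterate_succ_apply', map_sub, D.leibniz, hDX, smul_eq_mul, smul_eq_mul,
        ← add_assoc]
      ring
    rw [key]
    refine add_mem (map_mem_supported_Iio_succ δ D hDX hDC ih) (mul_mem ?_ ?_)
    · exact supported_mono (Set.Iio_subset_Iio (by omega))
        (map_mem_supported_Iio_succ δ D hDX hDC hs)
    · exact X_mem_supported.mpr (by simp)

end DerivationOrder

section Elimination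

/-- `x_i ↦ x_i` for `i ≤ n` and `x_{n+k} ↦ -T_k / s`. Evaluating `T_k` only at the values of
index `< n + k` (the others are set to `0`) makes the recursion well founded, and is harmless
when `T_k` has order `< n + k`. -/
def elimValue (n : ℕ) (s : MvPolynomial ℕ K) (T : ℕ → MvPolynomial ℕ K) (i : ℕ) :
    Localization.Away s :=
  if i ≤ n then algebraMap (MvPolynomial ℕ K) _ (X i)
  else -IsLocalization.Away.invSelf s *
    aeval (fun j => if _ : j < i then elimValue n s T j else 0) (T (i - n))
termination_by i

def elimHom (n : ℕ) (s : MvPolynomial ℕ K) (T : ℕ → MvPolynomial ℕ K) :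
    MvPolynomial ℕ K →ₐ[K] Localization.Away s :=
  aeval (elimValue n s T)

variable {n : ℕ} {s : MvPolynomial ℕ K} {T : ℕ → MvPolynomial ℕ K}

theorem elimHom_X_of_le {i : ℕ} (hi : i ≤ n) :
    elimHom n s T (X i) = algebraMap (MvPolynomial ℕ K) (Localization.Away s) (X i) := by
  rw [elimHom, aeval_X, elimValue, if_pos hi]

theorem elimHom_eq_algebraMap {p : MvPolynomial ℕ K} (hp : p ∈ supported K (Set.Iio (n + 1))) :
    elimHom n s T p = algebraMap _ _ p :=
  algHom_eq_of_mem_supported (elimHom n s T) (IsScalarTower.toAlgHom K _ _)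
    (fun _ hi => elimHom_X_of_le (Nat.lt_succ_iff.mp hi)) hp

theorem elimHom_mul_X_add (hs : s ∈ supported K (Set.Iio (n + 1))) {k : ℕ} (hk : 1 ≤ k)
    (hT : T k ∈ supported K (Set.Iio (n + k))) :
    elimHom n s T (s * X (n + k) + T k) = 0 := by
  have hvalue : elimHom n s T (X (n + k))
      = -IsLocalization.Away.invSelf s * elimHom n s T (T k) := by
    rw [elimHom, aeval_X, elimValue, if_neg (by omega), Nat.add_sub_cancel_left]
    congr 1
    exact algHom_eq_of_mem_supported _ _ (fun j hj => by simp [Set.mem_Iio.mp hj]) hT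
  rw [map_add, map_mul, elimHom_eq_algebraMap hs, hvalue, ← mul_assoc, mul_neg,
    IsLocalization.Away.mul_invSelf]
  ring

theorem algebraMap_sub_elimHom_mem (hs : s ∈ supported K (Set.Iio (n + 1)))
    (hT : ∀ k, 1 ≤ k → T k ∈ supported K (Set.Iio (n + k))) {I : Ideal (MvPolynomial ℕ K)}
    (hI : ∀ k, 1 ≤ k → s * X (n + k) + T k ∈ I) (p : MvPolynomial ℕ K) :
    algebraMap _ _ p - elimHom n s T p ∈ I.map (algebraMap _ (Localization.Away s)) := by
  set ι := IsScalarTower.toAlgHom K (MvPolynomial ℕ K) (Localization.Away s)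
  have hX : ∀ i, ι (X i) - elimHom n s T (X i) ∈ I.map ι := by
    intro i
    induction i using Nat.strong_induction_on with
    | _ i ih =>
    rcases le_or_gt i n with hi | hi
    · simp [ι, elimHom_X_of_le hi]
    obtain ⟨k, hk, rfl⟩ : ∃ k, 1 ≤ k ∧ i = n + k := ⟨i - n, by omega, by omega⟩
    have hTk := algHom_sub_mem_of_mem_supported _ _ _ (fun j hj => ih j hj) (hT k hk)
    have hzero := elimHom_mul_X_add hs hk (hT k hk)
    rw [map_add, map_mul, elimHom_eq_algebraMap hs] at hzero
    have hfactor : algebraMap _ _ s * (ι (X (n + k)) - elimHom n s T (X (n + k)))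
        = ι (s * X (n + k) + T k) - (ι (T k) - elimHom n s T (T k)) := by
      simp only [ι, IsScalarTower.coe_toAlgHom', map_add, map_mul]
      linear_combination -hzero
    rw [← Ideal.unit_mul_mem_iff_mem _ (IsLocalization.Away.algebraMap_isUnit s), hfactor]
    exact sub_mem (Ideal.mem_map_of_mem _ (hI k hk)) hTk
  exact algHom_sub_mem_of_mem_supported _ ι _ (fun i _ => hX i)
    (by rw [supported_univ]; trivial : p ∈ supported K Set.univ)

end Elimination

theorem mem_supported_Iio_ordOf_succ (f : MvPolynomial ℕ K) :
    f ∈ supported K (Set.Iio (ordOf f + 1)) := by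
  rw [mem_supported]
  intro i hi
  exact Nat.lt_succ_of_le (Finset.le_sup (f := id) hi)

section DiffIdeal

variable (δ : Derivation ℤ K K) (D : Derivation ℤ (MvPolynomial ℕ K) (MvPolynomial ℕ K))
  (hDX : ∀ n : ℕ, D (X n) = X (n + 1)) (hDC : ∀ a : K, D (C a) = C (δ a))
include hDX hDC

theorem saturation_diffIdeal_eq_comap_elimHom (f : MvPolynomial ℕ K) :
    saturation (diffIdeal D f) (sep f)
      = ((Ideal.span {f}).map (algebraMap _ (Localization.Away (sep f)))).comap
          (elimHom (ordOf f) (sep f) fun k => (⇑D)^[k] f - sep f * X (ordOf f + k)) := by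
  set n := ordOf f
  set s := sep f
  set T : ℕ → MvPolynomial ℕ K := fun k => (⇑D)^[k] f - s * X (n + k)
  have hf := mem_supported_Iio_ordOf_succ f
  have hs : s ∈ supported K (Set.Iio (n + 1)) := pderiv_mem_supported hf
  have hT : ∀ k, 1 ≤ k → T k ∈ supported K (Set.Iio (n + k)) := fun _ hk =>
    iterate_sub_pderiv_mul_X_mem_supported δ D hDX hDC hf hk
  have hiter : ∀ k, s * X (n + k) + T k = (⇑D)^[k] f := fun k => by simp [T]
  have hJ : ∀ k, (⇑D)^[k] f ∈ diffIdeal D f := fun k => Ideal.subset_span ⟨k, rfl⟩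
  have hmap : (diffIdeal D f).map (elimHom n s T) ≤ (Ideal.span {f}).map (algebraMap _ _) := by
    rw [diffIdeal, Ideal.map_span, Ideal.span_le]
    rintro _ ⟨_, ⟨_ | k, rfl⟩, rfl⟩
    · dsimp only
      rw [Function.iterate_zero_apply, elimHom_eq_algebraMap hf]
      exact Ideal.mem_map_of_mem _ (Ideal.mem_span_singleton_self f)
    · dsimp only
      rw [SetLike.mem_coe, ← hiter, elimHom_mul_X_add hs (by omega) (hT _ (by omega))]
      exact zero_mem _
  ext g
  constructor
  · rintro ⟨m, hm⟩
    have := hmap (Ideal.mem_map_of_mem (elimHom n s T) hm)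
    rwa [map_mul, map_pow, elimHom_eq_algebraMap hs,
      Ideal.unit_mul_mem_iff_mem _ ((IsLocalization.Away.algebraMap_isUnit s).pow m)] at this
  · intro hg
    rw [← comap_map_algebraMap_away_eq_saturation, Ideal.mem_comap]
    have hle : (Ideal.span {f}).map (algebraMap _ (Localization.Away s)) ≤
        (diffIdeal D f).map (algebraMap _ _) :=
      Ideal.map_mono (Ideal.span_le.mpr (by simpa using hJ 0))
    simpa using add_mem (algebraMap_sub_elimHom_mem hs hT (fun k _ => hiter k ▸ hJ k) g) (hle hg)

theorem isPrime_saturation_diffIdeal {f : MvPolynomial ℕ K} (hf : Irreducible f)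
    (hs : sep f ≠ 0) : (saturation (diffIdeal D f) (sep f)).IsPrime := by
  have hprime : Prime f := UniqueFactorizationMonoid.irreducible_iff_prime.mp hf
  have hdisj : Disjoint (Submonoid.powers (sep f) : Set (MvPolynomial ℕ K))
      (Ideal.span {f} : Set (MvPolynomial ℕ K)) := by
    refine Set.disjoint_left.mpr ?_
    rintro _ ⟨m, rfl⟩ hmem
    rw [SetLike.mem_coe, Ideal.mem_span_singleton] at hmem
    exact not_dvd_pderiv hs (hprime.dvd_of_dvd_pow hmem)
  have := IsLocalization.isPrime_of_isPrime_disjoint _ (Localization.Away (sep f)) _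
    ((Ideal.span_singleton_prime hprime.ne_zero).mpr hprime) hdisj
  rw [saturation_diffIdeal_eq_comap_elimHom δ D hDX hDC]
  exact Ideal.comap_isPrime _ _

end DiffIdeal

theorem stmt6 {K : Type*} [Field K] (δ : Derivation ℤ K K)
    (D : Derivation ℤ (MvPolynomial ℕ K) (MvPolynomial ℕ K))
    (hDX : ∀ n : ℕ, D (X n) = X (n + 1))
    (hDC : ∀ a : K, D (C a) = C (δ a))
    (f : MvPolynomial ℕ K) (hf : Irreducible f) (hs : sep f ≠ 0) :
    (saturation (diffIdeal D f) (sep f)).IsPrime ∧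
      ∀ h ∈ saturation (diffIdeal D f) (sep f),
        D h ∈ saturation (diffIdeal D f) (sep f) :=
  ⟨isPrime_saturation_diffIdeal δ D hDX hDC hf hs, fun _ hh =>
    D.map_mem_saturation (fun _ hx => D.map_mem_span_range_iterate f hx) _ hh⟩
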